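/- arXiv:2601.13750 — 4 statements merged into one kernel-verified Lean document; each statement's English description precedes it below -/
import Mathlib

section
/- Let 𝓕 denote the family of all functions ψ : [0,∞) → ℝ that are infinitely differentiable with ψ(0) = 0, ψ'(0) = 1, ψ(r) > 0 for all r > 0, and ψ''(r) ≥ 0 for all r > 0. Fix ψ₀ ∈ 𝓕. Then the map r ↦ ψ(r)/ψ₀(r) is nondecreasing on (0,∞) for every ψ ∈ 𝓕 if and only if ψ₀(r) = r for all r ≥ 0. -/
/-- The family `𝓕` of model (warping) functions of Cartan–Hadamard model manifolds:
smooth `ψ` with `ψ(0) = 0`, `ψ'(0) = 1`, `ψ > 0` on `(0,∞)` and `ψ'' ≥ 0` on `(0,∞)`. -/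
def modelFam (ψ : ℝ → ℝ) : Prop :=
  ContDiff ℝ (⊤ : ℕ∞) ψ ∧ ψ 0 = 0 ∧ deriv ψ 0 = 1 ∧
    (∀ r : ℝ, 0 < r → 0 < ψ r) ∧ (∀ r : ℝ, 0 < r → 0 ≤ deriv (deriv ψ) r)

lemma mf_id : modelFam (fun r : ℝ => r) := by
  refine ⟨contDiff_id, rfl, by simp, fun r hr => hr, fun r hr => ?_⟩
  have h1 : deriv (fun r : ℝ => r) = fun _ : ℝ => (1:ℝ) := by
    funext x; simp
  rw [h1, deriv_const]

lemma mf_deriv_mono {ψ : ℝ → ℝ} (h : modelFam ψ) : MonotoneOn (deriv ψ) (Set.Ici (0:ℝ)) := by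
  obtain ⟨hs, -, -, -, h2⟩ := h
  have hd : ContDiff ℝ ((⊤ : ℕ∞) : WithTop ℕ∞) (deriv ψ) := (contDiff_infty_iff_deriv.mp (hs.of_le (by simp))).2
  refine monotoneOn_of_deriv_nonneg (convex_Ici 0) hd.continuous.continuousOn
    (hd.differentiable (by simp)).differentiableOn ?_
  intro x hx
  rw [interior_Ici] at hx
  exact h2 x hx

/-- Every model function dominates the identity on `[0,∞)`. -/
lemma mf_ge_id {ψ : ℝ → ℝ} (h : modelFam ψ) : ∀ r : ℝ, 0 ≤ r → r ≤ ψ r := by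
  obtain ⟨hs, h0, h1, -, -⟩ := id h
  have hdiff : Differentiable ℝ ψ := hs.differentiable (by simp)
  have hg : MonotoneOn (fun r => ψ r - r) (Set.Ici (0:ℝ)) := by
    refine monotoneOn_of_deriv_nonneg (convex_Ici 0)
      (hdiff.continuous.sub continuous_id).continuousOn
      ((hdiff.sub differentiable_id).differentiableOn) ?_
    intro x hx
    rw [interior_Ici] at hx
    have hder : deriv (fun r => ψ r - r) x = deriv ψ x - 1 := by
      have : HasDerivAt (fun r => ψ r - r) (deriv ψ x - 1) x :=
        (hdiff x).hasDerivAt.sub (hasDerivAt_id x)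
      exact this.deriv
    rw [hder]
    have : deriv ψ 0 ≤ deriv ψ x := mf_deriv_mono h (Set.mem_Ici.mpr (le_refl 0)) (Set.mem_Ici.mpr hx.le) hx.le
    rw [h1] at this
    linarith
  intro r hr
  have := hg (Set.self_mem_Ici) hr hr
  simp only [h0, sub_zero, zero_sub] at this
  linarith

lemma mf_convex {ψ : ℝ → ℝ} (h : modelFam ψ) : ConvexOn ℝ (Set.Ici (0:ℝ)) ψ := by
  obtain ⟨hs, -, -, -, h2⟩ := h
  have hd : ContDiff ℝ ((⊤ : ℕ∞) : WithTop ℕ∞) (deriv ψ) := (contDiff_infty_iff_deriv.mp (hs.of_le (by simp))).2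
  refine convexOn_of_deriv2_nonneg (convex_Ici 0) hs.continuous.continuousOn
    (hs.differentiable (by simp)).differentiableOn
    (hd.differentiable (by simp)).differentiableOn ?_
  intro x hx
  rw [interior_Ici] at hx
  simpa [Function.iterate_succ, Function.comp] using h2 x hx

/-- For `ψ₀ ∈ 𝓕`, the quotient `r ↦ ψ(r)/ψ₀(r)` is nondecreasing on
`(0,∞)` for every `ψ ∈ 𝓕` if and only if `ψ₀` is the identity `r ↦ r`. -/
theorem stmt_1 (ψ₀ : ℝ → ℝ) (h₀ : modelFam ψ₀) :
    (∀ ψ : ℝ → ℝ, modelFam ψ →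
        MonotoneOn (fun r => ψ r / ψ₀ r) (Set.Ioi (0:ℝ))) ↔
    (∀ r : ℝ, 0 ≤ r → ψ₀ r = r) := by
  obtain ⟨hs, h00, h01, hpos, h2⟩ := id h₀
  constructor
  · intro H r hr
    rcases hr.eq_or_lt with h | hrpos
    · rw [← h, h00]
    have hge : r ≤ ψ₀ r := mf_ge_id h₀ r hr
    -- use ψ = id
    have Hmono := H (fun r : ℝ => r) mf_id
    -- compute the limit of a / ψ₀ a as a → 0⁺, which is 1
    have hslope : Filter.Tendsto (fun a => ψ₀ a / a) (nhdsWithin 0 (Set.Ioi 0)) (nhds 1) := by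
      have hda : HasDerivAt ψ₀ 1 0 := by
        have := (hs.differentiable (by simp) 0).hasDerivAt
        rwa [h01] at this
      have := hasDerivAt_iff_tendsto_slope.mp hda
      have h' := this.mono_left (nhdsWithin_mono 0 (by
        intro x hx
        exact Set.mem_compl_singleton_iff.mpr (ne_of_gt hx)))
      refine h'.congr' ?_
      filter_upwards [self_mem_nhdsWithin] with a ha
      simp [slope_def_field, div_eq_inv_mul, h00]
    have hinv : Filter.Tendsto (fun a => a / ψ₀ a) (nhdsWithin 0 (Set.Ioi 0)) (nhds 1) := by
      have h1 : Filter.Tendsto (fun a => (ψ₀ a / a)⁻¹) (nhdsWithin 0 (Set.Ioi 0)) (nhds 1) := by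
        simpa using hslope.inv₀ one_ne_zero
      refine h1.congr' ?_
      filter_upwards [self_mem_nhdsWithin] with a (ha : (0:ℝ) < a)
      rw [inv_div]
    have hle : (1:ℝ) ≤ r / ψ₀ r := by
      refine le_of_tendsto hinv ?_
      filter_upwards [Ioo_mem_nhdsGT_of_mem (Set.left_mem_Ico.mpr hrpos)] with a ha
      exact Hmono ha.1 hrpos ha.2.le
    have hψpos : 0 < ψ₀ r := hpos r hrpos
    have : ψ₀ r ≤ r := by
      rw [le_div_iff₀ hψpos, one_mul] at hle
      exact hle
    linarith
  · intro hid ψ hψ a ha b hb hab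
    simp only [Set.mem_Ioi] at ha hb
    show ψ a / ψ₀ a ≤ ψ b / ψ₀ b
    rw [hid a ha.le, hid b hb.le]
    have hcv := mf_convex hψ
    have hψb : 0 < ψ b := hψ.2.2.2.1 b hb
    rw [div_le_div_iff₀ ha hb]
    -- ψ a ≤ (a/b) ψ b by convexity with ψ 0 = 0
    have key : ψ a ≤ (a / b) * ψ b := by
      have hw1 : (0:ℝ) ≤ 1 - a / b := by
        have : a / b ≤ 1 := (div_le_one hb).mpr hab
        linarith
      have hw2 : (0:ℝ) ≤ a / b := by positivity
      have hsum : (1 - a / b) + a / b = 1 := by ring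
      have := hcv.2 (Set.self_mem_Ici) (le_of_lt hb : (0:ℝ) ≤ b) hw1 hw2 hsum
      simp only [smul_eq_mul, mul_zero, zero_add] at this
      rw [div_mul_cancel₀] at this
      · rwa [hψ.2.1, mul_zero, zero_add] at this
      · exact ne_of_gt hb
    calc ψ a * b ≤ (a / b * ψ b) * b := by nlinarith
      _ = ψ b * a := by field_simp
end

section
/- Let N ≥ 3, set 2⋆ = 2N/(N−2) and N' = N/(N−1). Let ψ : [0,∞) → ℝ be infinitely differentiable with ψ(0) = 0, ψ'(0) = 1, ψ(r) > 0 for r > 0, and ψ''(r) ≥ 0 for all r > 0, and define J(ϱ) = ( ψ( (N ϱ/ω_N)^{1/N} ) / (N ϱ/ω_N)^{1/N} )^{N−1} for ϱ > 0. Then for every nonincreasing, locally absolutely continuous function φ : (0,∞) → [0,∞) with lim_{ϱ→∞} φ(ϱ) = 0 and ∫₀^∞ φ'(ϱ)² ϱ^{2/N'} J(ϱ) dϱ < ∞, one has (1/2⋆)² ∫₀^∞ φ(ϱ)² ϱ^{−2/N} J(ϱ) dϱ ≤ ∫₀^∞ φ'(ϱ)² ϱ^{2/N'} J(ϱ) dϱ.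 -/
open MeasureTheory Set ENNReal

/-- Surface area of the unit sphere `S^{N-1} ⊂ ℝ^N`. -/
noncomputable def omegaN (N : ℕ) : ℝ :=
  2 * Real.pi ^ ((N : ℝ) / 2) / Real.Gamma ((N : ℝ) / 2)

/-- The Jacobian distortion factor `J(ϱ) = (ψ(r)/r)^{N-1}` with `r = (Nϱ/ω_N)^{1/N}`. -/
noncomputable def Jfun (N : ℕ) (ψ : ℝ → ℝ) (t : ℝ) : ℝ :=
  if t = 0 then 1 else
    (ψ (((N : ℝ) * t / omegaN N) ^ ((1:ℝ) / (N : ℝ))) /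
      (((N : ℝ) * t / omegaN N) ^ ((1:ℝ) / (N : ℝ)))) ^ (N - 1)

/-- The critical Sobolev exponent `2⋆ = 2N/(N-2)`. -/
noncomputable def twoStar (N : ℕ) : ℝ := 2 * (N : ℝ) / ((N : ℝ) - 2)

/-- The Hölder conjugate `N' = N/(N-1)`. -/
noncomputable def Nprime (N : ℕ) : ℝ := (N : ℝ) / ((N : ℝ) - 1)

lemma measurable_rpow_const'' (c : ℝ) : Measurable fun x : ℝ => x ^ c := by
  have h : ∀ x : ℝ, x ^ c =
      if x = 0 then (if c = 0 then 1 else 0)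
      else if x < 0 then Real.exp (Real.log x * c) * Real.cos (c * Real.pi)
      else Real.exp (Real.log x * c) := by
    intro x
    rcases lt_trichotomy x 0 with h | h | h
    · rw [if_neg h.ne, if_pos h, Real.rpow_def_of_neg h]
    · subst h
      by_cases hc : c = 0 <;> simp [hc, Real.zero_rpow]
    · rw [if_neg h.ne', if_neg (not_lt.2 h.le), Real.rpow_def_of_pos h]
  simp only [funext h]
  refine Measurable.ite (by simp) measurable_const ?_
  exact Measurable.ite measurableSet_Iio
    (((Real.measurable_log.mul measurable_const).exp).mul measurable_const)
    ((Real.measurable_log.mul measurable_const).exp)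

lemma omegaN_pos {N : ℕ} (hN : 3 ≤ N) : 0 < omegaN N := by
  have hn : (0:ℝ) < (N:ℝ) / 2 := by
    have : (3:ℝ) ≤ (N:ℝ) := by exact_mod_cast hN
    linarith
  exact div_pos (by positivity) (Real.Gamma_pos_of_pos hn)

lemma Jfun_facts {N : ℕ} (hN : 3 ≤ N) {ψ : ℝ → ℝ}
    (hψ : ContDiff ℝ (⊤ : ℕ∞) ψ) (h0 : ψ 0 = 0) (h1 : deriv ψ 0 = 1)
    (hconv : ∀ r : ℝ, 0 < r → 0 ≤ deriv (deriv ψ) r) :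
    (∀ t : ℝ, 0 < t → 1 ≤ Jfun N ψ t) ∧
      (∀ s t : ℝ, 0 < s → s ≤ t → Jfun N ψ s ≤ Jfun N ψ t) := by
  have hcont : Continuous ψ := hψ.continuous
  have hdiff : Differentiable ℝ ψ := hψ.differentiable (by simp)
  have hψ' : ContDiff ℝ ((⊤:ℕ∞):WithTop ℕ∞) ψ := hψ.of_le (by simp)
  have hdiff' : Differentiable ℝ (deriv ψ) :=
    ((contDiff_infty_iff_deriv.mp hψ').2).differentiable (by simp)
  have hcx : ConvexOn ℝ (Ici (0:ℝ)) ψ := by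
    refine convexOn_of_deriv2_nonneg (convex_Ici 0) hcont.continuousOn
      (hdiff.differentiableOn) (hdiff'.differentiableOn) ?_
    intro x hx
    rw [interior_Ici] at hx
    have : deriv^[2] ψ x = deriv (deriv ψ) x := by
      simp [Function.iterate_succ_apply']
    rw [this]
    exact hconv x hx
  -- slope monotonicity from 0
  have hslope : ∀ s t : ℝ, 0 < s → s ≤ t → ψ s / s ≤ ψ t / t := by
    intro s t hs hst
    have := hcx.secant_mono (a := 0) (x := s) (y := t)
      (Set.self_mem_Ici) (le_of_lt hs) (le_of_lt (lt_of_lt_of_le hs hst)) hs.ne' (lt_of_lt_of_le hs hst).ne' hst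
    simpa [h0] using this
  -- slope ≥ 1
  have hone : ∀ r : ℝ, 0 < r → 1 ≤ ψ r / r := by
    intro r hr
    have hd : HasDerivAt ψ 1 0 := h1 ▸ (hdiff 0).hasDerivAt
    have htend : Filter.Tendsto (fun s : ℝ => ψ s / s) (nhdsWithin 0 (Ioi 0)) (nhds 1) := by
      have := (hasDerivAt_iff_tendsto_slope.mp hd).mono_left
        (nhdsWithin_mono 0 (fun x hx => (Set.mem_compl_singleton_iff).2 (ne_of_gt hx)))
      refine this.congr' ?_
      filter_upwards [self_mem_nhdsWithin] with s hs
      simp [slope_def_field, h0]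
    refine le_of_tendsto htend ?_
    filter_upwards [Ioc_mem_nhdsGT hr] with s hs
    exact hslope s r hs.1 hs.2
  -- now about Jfun
  have hω := omegaN_pos hN
  have hnpos : (0:ℝ) < (N:ℝ) := by positivity
  have hr : ∀ t : ℝ, 0 < t → 0 < ((N:ℝ) * t / omegaN N) ^ ((1:ℝ)/(N:ℝ)) := by
    intro t ht
    exact Real.rpow_pos_of_pos (by positivity) _
  constructor
  · intro t ht
    rw [Jfun, if_neg ht.ne']
    exact one_le_pow₀ (hone _ (hr t ht))
  · intro s t hs hst
    have ht : 0 < t := lt_of_lt_of_le hs hst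
    rw [Jfun, if_neg hs.ne', Jfun, if_neg ht.ne']
    have hrs : ((N:ℝ) * s / omegaN N) ^ ((1:ℝ)/(N:ℝ)) ≤ ((N:ℝ) * t / omegaN N) ^ ((1:ℝ)/(N:ℝ)) :=
      Real.rpow_le_rpow (by positivity)
        (by gcongr) (by positivity)
    have h1s := hone _ (hr s hs)
    exact pow_le_pow_left₀ (by linarith [h1s]) (hslope _ _ (hr s hs) hrs) _

/-- One-dimensional weighted form of the sharp Hardy inequality on a
Cartan–Hadamard model manifold:
`(1/2⋆)² ∫₀^∞ φ² ϱ^{-2/N} J dϱ ≤ ∫₀^∞ φ'² ϱ^{2/N'} J dϱ`. -/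
theorem stmt_9 (N : ℕ) (hN : 3 ≤ N) (ψ : ℝ → ℝ)
    (hψ : ContDiff ℝ (⊤ : ℕ∞) ψ) (h0 : ψ 0 = 0) (h1 : deriv ψ 0 = 1)
    (hpos : ∀ r : ℝ, 0 < r → 0 < ψ r)
    (hconv : ∀ r : ℝ, 0 < r → 0 ≤ deriv (deriv ψ) r)
    (φ : ℝ → ℝ) (hφ0 : ∀ ϱ : ℝ, 0 < ϱ → 0 ≤ φ ϱ)
    (hanti : AntitoneOn φ (Set.Ioi 0))
    (hac : ∀ a b : ℝ, 0 < a → a ≤ b → φ b - φ a = ∫ t in a..b, deriv φ t)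
    (hlim : Filter.Tendsto φ Filter.atTop (nhds 0))
    (hfin : IntegrableOn
      (fun ϱ => (deriv φ ϱ) ^ 2 * ϱ ^ ((2:ℝ) / Nprime N) * Jfun N ψ ϱ)
      (Set.Ioi 0)) :
    ∫⁻ ϱ in Set.Ioi (0:ℝ),
        ENNReal.ofReal
          ((1 / twoStar N) ^ 2 * (φ ϱ) ^ 2 * ϱ ^ (-(2:ℝ) / (N : ℝ)) * Jfun N ψ ϱ) ≤
    ∫⁻ ϱ in Set.Ioi (0:ℝ),
        ENNReal.ofReal
          ((deriv φ ϱ) ^ 2 * ϱ ^ ((2:ℝ) / Nprime N) * Jfun N ψ ϱ) := by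
  -- basic numerology
  set n : ℝ := (N : ℝ) with hn
  have hn3 : (3:ℝ) ≤ n := by rw [hn]; exact_mod_cast hN
  have hn0 : (0:ℝ) < n := by linarith
  have hinv : (1:ℝ)/n ≤ 1/3 := by
    rw [div_le_div_iff₀ hn0 (by norm_num)]; linarith
  have hinv0 : (0:ℝ) < 1/n := by positivity
  set σ : ℝ := 3/2 - 1/n with hσdef
  set κ : ℝ := 1/2 - 1/n with hκdef
  set e₀ : ℝ := -(1/2) - 1/n with he₀def
  have hκ : 0 < κ := by rw [hκdef]; linarith
  have hσ1 : 1 < σ := by rw [hσdef]; linarith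
  have he₀ : -1 < e₀ := by rw [he₀def]; linarith
  have he₀κ : e₀ + 1 = κ := by rw [he₀def, hκdef]; ring
  have hNper : (2:ℝ) / Nprime N = σ + κ := by
    rw [Nprime, hσdef, hκdef, ← hn]
    have hn1 : n - 1 ≠ 0 := by intro h; linarith
    field_simp
    ring
  have hstar : 1 / twoStar N = κ := by
    rw [twoStar, hκdef, ← hn]
    have hn2 : n - 2 ≠ 0 := by intro h; linarith
    rw [one_div_div]
    field_simp
  -- J facts
  obtain ⟨hJ1, hJm⟩ := Jfun_facts hN hψ h0 h1 hconv
  set J : ℝ → ℝ := Jfun N ψ with hJdef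
  have hJmeas : Measurable J := by
    rw [hJdef]
    unfold Jfun
    refine Measurable.ite (by simp) measurable_const ?_
    have hg : Measurable fun t : ℝ => ((N : ℝ) * t / omegaN N) ^ ((1:ℝ) / (N : ℝ)) :=
      (measurable_rpow_const'' _).comp ((measurable_const.mul measurable_id).div_const _)
    exact ((hψ.continuous.measurable.comp hg).div hg).pow_const _
  have hJpos : ∀ t : ℝ, 0 < t → 0 < J t := fun t ht => lt_of_lt_of_le one_pos (hJ1 t ht)
  -- measurable ingredients
  have hdm : Measurable (deriv φ) := measurable_deriv φ
  set g : ℝ → ℝ≥0∞ := fun t => ENNReal.ofReal (deriv φ t ^ 2 * t ^ σ * J t) with hgdef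
  have hgmeas : Measurable g := by
    apply Measurable.ennreal_ofReal
    exact ((hdm.pow_const 2).mul (measurable_rpow_const'' σ)).mul hJmeas
  have hgtop : ∀ t, g t ≠ ⊤ := fun t => ENNReal.ofReal_ne_top
  set f : ℝ → ℝ≥0∞ := fun ϱ => ENNReal.ofReal (κ * ϱ ^ e₀) with hfdef
  have hfmeas : Measurable f :=
    Measurable.ennreal_ofReal (measurable_const.mul (measurable_rpow_const'' e₀))
  have hftop : ∀ ϱ, f ϱ ≠ ⊤ := fun ϱ => ENNReal.ofReal_ne_top
  -- the key pointwise estimate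
  have key : ∀ ϱ : ℝ, ϱ ∈ Ioi (0:ℝ) →
      ENNReal.ofReal ((1 / twoStar N) ^ 2 * (φ ϱ) ^ 2 * ϱ ^ (-(2:ℝ) / n) * J ϱ) ≤
        f ϱ * ∫⁻ t in Ioi ϱ, g t := by
    intro ϱ hϱ
    have hϱ0 : (0:ℝ) < ϱ := hϱ
    set I := ∫⁻ t in Ioi ϱ, g t with hIdef
    by_cases hItop : I = ⊤
    · rw [hItop, ENNReal.mul_top]
      · exact le_top
      · simp only [hfdef, ne_eq, ENNReal.ofReal_eq_zero, not_le]
        have : (0:ℝ) < ϱ ^ e₀ := Real.rpow_pos_of_pos hϱ0 _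
        positivity
    have hJϱ1 : (1:ℝ) ≤ J ϱ := hJ1 ϱ hϱ0
    have hJϱ0 : (0:ℝ) < J ϱ := hJpos ϱ hϱ0
    have hσκ : σ - 1 = κ := by rw [hσdef, hκdef]; ring
    -- the two Hoelder factors
    set u : ℝ → ℝ := fun t => |deriv φ t| * (t ^ (σ/2) * Real.sqrt (J t)) with hudef
    set v : ℝ → ℝ := fun t => (t ^ (σ/2) * Real.sqrt (J t))⁻¹ with hvdef
    have hsm : Measurable fun t : ℝ => t ^ (σ/2) * Real.sqrt (J t) :=
      (measurable_rpow_const'' _).mul (Real.continuous_sqrt.measurable.comp hJmeas)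
    have humeas : Measurable u := hdm.abs.mul hsm
    have hvmeas : Measurable v := hsm.inv
    have hxpos : ∀ t : ℝ, ϱ < t → 0 < t ^ (σ/2) * Real.sqrt (J t) := by
      intro t ht
      have ht0 : 0 < t := hϱ0.trans ht
      exact mul_pos (Real.rpow_pos_of_pos ht0 _) (Real.sqrt_pos.2 (hJpos t ht0))
    -- Hoelder inequality
    set Db : ℝ≥0∞ := ENNReal.ofReal (ϱ ^ (1 - σ) / (σ - 1) * (J ϱ)⁻¹) with hDbdef
    have hsq2 : ∀ t : ℝ, 0 < t → (t ^ (σ/2)) ^ 2 = t ^ σ := by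
      intro t ht0
      rw [← Real.rpow_natCast (t ^ (σ/2)) 2, ← Real.rpow_mul ht0.le]
      norm_num
    have hF2 : ∫⁻ t in Ioi ϱ, ENNReal.ofReal (u t) ^ (2:ℝ) = I := by
      rw [hIdef]
      refine setLIntegral_congr_fun measurableSet_Ioi ?_
      intro t ht
      beta_reduce
      have ht0 : (0:ℝ) < t := hϱ0.trans ht
      have hunn : 0 ≤ u t := mul_nonneg (abs_nonneg _) (hxpos t ht).le
      rw [ENNReal.ofReal_rpow_of_nonneg hunn (by norm_num)]
      congr 1
      rw [Real.rpow_two, hudef]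
      simp only [mul_pow, sq_abs, hsq2 t ht0, Real.sq_sqrt (hJpos t ht0).le, hgdef]
      ring
    have hG2 : ∫⁻ t in Ioi ϱ, ENNReal.ofReal (v t) ^ (2:ℝ) ≤ Db := by
      have hstep : ∫⁻ t in Ioi ϱ, ENNReal.ofReal (v t) ^ (2:ℝ) ≤
          ∫⁻ t in Ioi ϱ, ENNReal.ofReal (t ^ (-σ) * (J ϱ)⁻¹) := by
        refine lintegral_mono_ae ((ae_restrict_iff' measurableSet_Ioi).2
          (Filter.Eventually.of_forall (fun t ht => ?_)))
        have ht0 : (0:ℝ) < t := hϱ0.trans ht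
        have hxp := hxpos t ht
        rw [ENNReal.ofReal_rpow_of_nonneg (by positivity) (by norm_num)]
        refine ENNReal.ofReal_le_ofReal ?_
        rw [Real.rpow_two, hvdef]
        simp only [inv_pow, mul_pow, hsq2 t ht0, Real.sq_sqrt (hJpos t ht0).le]
        rw [Real.rpow_neg ht0.le, ← mul_inv]
        refine inv_anti₀ (by positivity) ?_
        exact mul_le_mul_of_nonneg_left (hJm ϱ t hϱ0 (le_of_lt ht)) (Real.rpow_nonneg ht0.le _)
      refine hstep.trans ?_
      have hintσ : IntegrableOn (fun t : ℝ => t ^ (-σ) * (J ϱ)⁻¹) (Ioi ϱ) :=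
        (integrableOn_Ioi_rpow_of_lt (by linarith) hϱ0).mul_const _
      rw [← ofReal_integral_eq_lintegral_ofReal hintσ
        ((ae_restrict_iff' measurableSet_Ioi).2 (Filter.Eventually.of_forall (fun t ht => by
          have ht0 : (0:ℝ) < t := hϱ0.trans ht
          have : (0:ℝ) < t ^ (-σ) := Real.rpow_pos_of_pos ht0 _
          positivity)))]
      rw [hDbdef]
      refine ENNReal.ofReal_le_ofReal ?_
      rw [MeasureTheory.integral_mul_const, integral_Ioi_rpow_of_lt (by linarith) hϱ0]
      have h1σ : -σ + 1 = 1 - σ := by ring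
      rw [h1σ]
      have hσ1' : (0:ℝ) < σ - 1 := by linarith
      have hne : (1:ℝ) - σ ≠ 0 := by intro h; linarith
      have : -ϱ ^ (1 - σ) / (1 - σ) = ϱ ^ (1 - σ) / (σ - 1) := by
        field_simp
        ring
      rw [this]
    have hMle : ∫⁻ t in Ioi ϱ, ENNReal.ofReal |deriv φ t| ≤ I ^ ((1:ℝ)/2) * Db ^ ((1:ℝ)/2) := by
      have hconj : Real.HolderConjugate 2 2 := Real.HolderConjugate.two_two
      have hCS := ENNReal.lintegral_mul_le_Lp_mul_Lq (volume.restrict (Ioi ϱ)) hconj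
        (humeas.ennreal_ofReal.aemeasurable) (hvmeas.ennreal_ofReal.aemeasurable)
      have heq : ∫⁻ t in Ioi ϱ, ENNReal.ofReal |deriv φ t| =
          ∫⁻ t in Ioi ϱ, ((fun t => ENNReal.ofReal (u t)) * fun t => ENNReal.ofReal (v t)) t := by
        refine setLIntegral_congr_fun measurableSet_Ioi ?_
        intro t ht
        beta_reduce
        have hxp := hxpos t ht
        rw [Pi.mul_apply, ← ENNReal.ofReal_mul (mul_nonneg (abs_nonneg _) hxp.le)]
        congr 1
        show |deriv φ t| = |deriv φ t| * (t ^ (σ/2) * Real.sqrt (J t)) *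
          (t ^ (σ/2) * Real.sqrt (J t))⁻¹
        rw [mul_inv_cancel_right₀ hxp.ne']
      rw [heq]
      refine hCS.trans ?_
      exact mul_le_mul (by rw [hF2]) (ENNReal.rpow_le_rpow hG2 (by norm_num)) zero_le zero_le
    have hMfin : (∫⁻ t in Ioi ϱ, ENNReal.ofReal |deriv φ t|) ≠ ⊤ := by
      refine (lt_of_le_of_lt hMle ?_).ne
      exact ENNReal.mul_lt_top
        (ENNReal.rpow_ne_top_of_nonneg (by norm_num) hItop).lt_top
        (ENNReal.rpow_ne_top_of_nonneg (by norm_num) ENNReal.ofReal_ne_top).lt_top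
    -- integrability of the derivative
    have habs : IntegrableOn (fun t => |deriv φ t|) (Ioi ϱ) := by
      refine ⟨hdm.abs.aestronglyMeasurable, ?_⟩
      rw [hasFiniteIntegral_iff_ofReal (Filter.Eventually.of_forall (fun t => abs_nonneg _))]
      exact hMfin.lt_top
    have hder_int : IntegrableOn (deriv φ) (Ioi ϱ) :=
      habs.mono' hdm.aestronglyMeasurable
        (Filter.Eventually.of_forall (fun t => by rw [Real.norm_eq_abs]))
    -- φ ϱ is bounded by the integral of |deriv φ|
    have hφle : φ ϱ ≤ (∫⁻ t in Ioi ϱ, ENNReal.ofReal |deriv φ t|).toReal := by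
      have habs_eq : ∫ t in Ioi ϱ, |deriv φ t| =
          (∫⁻ t in Ioi ϱ, ENNReal.ofReal |deriv φ t|).toReal := by
        rw [integral_eq_lintegral_of_nonneg_ae
          (Filter.Eventually.of_forall (fun t => abs_nonneg _)) hdm.abs.aestronglyMeasurable]
      have hb : ∀ b : ℝ, ϱ ≤ b → φ ϱ - φ b ≤
          (∫⁻ t in Ioi ϱ, ENNReal.ofReal |deriv φ t|).toReal := by
        intro b hbge
        have heq := hac ϱ b hϱ0 hbge
        have h1 : φ ϱ - φ b = -(∫ t in ϱ..b, deriv φ t) := by rw [← heq]; ring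
        rw [h1]
        calc -(∫ t in ϱ..b, deriv φ t) ≤ |∫ t in ϱ..b, deriv φ t| := neg_le_abs _
          _ ≤ ∫ t in ϱ..b, |deriv φ t| := intervalIntegral.abs_integral_le_integral_abs hbge
          _ = ∫ t in Ioc ϱ b, |deriv φ t| := intervalIntegral.integral_of_le hbge
          _ ≤ ∫ t in Ioi ϱ, |deriv φ t| := by
              refine setIntegral_mono_set habs
                ((ae_restrict_iff' measurableSet_Ioi).2
                  (Filter.Eventually.of_forall (fun t _ => abs_nonneg _)))
                (HasSubset.Subset.eventuallyLE Ioc_subset_Ioi_self)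
          _ = _ := habs_eq
      have htend : Filter.Tendsto (fun b => φ ϱ - φ b) Filter.atTop (nhds (φ ϱ - 0)) :=
        tendsto_const_nhds.sub hlim
      have := le_of_tendsto htend (Filter.eventually_atTop.2 ⟨ϱ, hb⟩)
      simpa using this
    have hofφ : ENNReal.ofReal (φ ϱ) ≤ I ^ ((1:ℝ)/2) * Db ^ ((1:ℝ)/2) :=
      le_trans (le_trans (ENNReal.ofReal_le_ofReal hφle) ENNReal.ofReal_toReal_le) hMle
    -- square it
    have hhalf : ∀ x : ℝ≥0∞, x ^ ((1:ℝ)/2) * x ^ ((1:ℝ)/2) = x := by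
      intro x
      rw [← sq, ← ENNReal.rpow_natCast (x ^ ((1:ℝ)/2)) 2, ← ENNReal.rpow_mul]
      norm_num
    have hsqle : ENNReal.ofReal (φ ϱ ^ 2) ≤ I * Db := by
      have h2 := mul_le_mul' hofφ hofφ
      rw [← ENNReal.ofReal_mul (hφ0 ϱ hϱ0), ← sq] at h2
      calc ENNReal.ofReal (φ ϱ ^ 2) ≤
          I ^ ((1:ℝ)/2) * Db ^ ((1:ℝ)/2) * (I ^ ((1:ℝ)/2) * Db ^ ((1:ℝ)/2)) := h2
        _ = (I ^ ((1:ℝ)/2) * I ^ ((1:ℝ)/2)) * (Db ^ ((1:ℝ)/2) * Db ^ ((1:ℝ)/2)) := by ring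
        _ = I * Db := by rw [hhalf, hhalf]
    -- conclude
    have hsplit : ENNReal.ofReal ((1 / twoStar N) ^ 2 * (φ ϱ) ^ 2 * ϱ ^ (-(2:ℝ) / n) * J ϱ) =
        ENNReal.ofReal (κ ^ 2 * ϱ ^ (-(2:ℝ) / n) * J ϱ) * ENNReal.ofReal (φ ϱ ^ 2) := by
      rw [hstar, ← ENNReal.ofReal_mul (by
        have : (0:ℝ) < ϱ ^ (-(2:ℝ)/n) := Real.rpow_pos_of_pos hϱ0 _
        positivity)]
      congr 1
      ring
    rw [hsplit]
    calc ENNReal.ofReal (κ ^ 2 * ϱ ^ (-(2:ℝ) / n) * J ϱ) * ENNReal.ofReal (φ ϱ ^ 2)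
        ≤ ENNReal.ofReal (κ ^ 2 * ϱ ^ (-(2:ℝ) / n) * J ϱ) * (I * Db) :=
          mul_le_mul_right hsqle _
      _ = (ENNReal.ofReal (κ ^ 2 * ϱ ^ (-(2:ℝ) / n) * J ϱ) * Db) * I := by ring
      _ = f ϱ * I := by
          congr 1
          rw [hDbdef, ← ENNReal.ofReal_mul (by
            have : (0:ℝ) < ϱ ^ (-(2:ℝ)/n) := Real.rpow_pos_of_pos hϱ0 _
            positivity)]
          rw [hfdef]
          congr 1
          have hrpw : ϱ ^ (-(2:ℝ)/n) * ϱ ^ (1 - σ) = ϱ ^ e₀ := by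
            rw [← Real.rpow_add hϱ0]
            congr 1
            rw [he₀def, hσdef]
            ring
          rw [show κ ^ 2 * ϱ ^ (-(2:ℝ)/n) * J ϱ * (ϱ ^ (1-σ)/(σ-1) * (J ϱ)⁻¹)
              = κ^2/(σ-1) * (ϱ ^ (-(2:ℝ)/n) * ϱ ^ (1-σ)) * (J ϱ * (J ϱ)⁻¹) from by ring,
            hrpw, mul_inv_cancel₀ hJϱ0.ne', hσκ, mul_one, sq, mul_div_assoc,
            div_self hκ.ne', mul_one]
  -- assembly
  calc
    ∫⁻ ϱ in Ioi (0:ℝ), ENNReal.ofReal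
        ((1 / twoStar N) ^ 2 * (φ ϱ) ^ 2 * ϱ ^ (-(2:ℝ) / n) * J ϱ)
      ≤ ∫⁻ ϱ in Ioi (0:ℝ), f ϱ * ∫⁻ t in Ioi ϱ, g t := by
        refine lintegral_mono_ae ?_
        exact (ae_restrict_iff' measurableSet_Ioi).2 (Filter.Eventually.of_forall key)
    _ = ∫⁻ ϱ in Ioi (0:ℝ), ∫⁻ t in Ioi (0:ℝ), f ϱ * (Ioi ϱ).indicator g t := by
        refine lintegral_congr_ae ((ae_restrict_iff' measurableSet_Ioi).2
          (Filter.Eventually.of_forall (fun ϱ hϱ => ?_)))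
        dsimp only
        rw [lintegral_const_mul' _ _ (hftop ϱ), lintegral_indicator measurableSet_Ioi,
          Measure.restrict_restrict measurableSet_Ioi]
        congr 2
        rw [Set.Ioi_inter_Ioi, max_eq_left (le_of_lt hϱ)]
    _ = ∫⁻ t in Ioi (0:ℝ), ∫⁻ ϱ in Ioi (0:ℝ), f ϱ * (Ioi ϱ).indicator g t := by
        refine lintegral_lintegral_swap ?_
        have : (Function.uncurry fun (ϱ t : ℝ) => f ϱ * (Ioi ϱ).indicator g t) =
            {p : ℝ × ℝ | p.1 < p.2}.indicator (fun p => f p.1 * g p.2) := by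
          funext p
          by_cases hp : p.1 < p.2
          · rw [Function.uncurry_apply_pair,
              Set.indicator_of_mem (Set.mem_Ioi.2 hp),
              Set.indicator_of_mem (show p ∈ {p : ℝ × ℝ | p.1 < p.2} from hp)]
          · rw [Function.uncurry_apply_pair,
              Set.indicator_of_notMem (fun h => hp (Set.mem_Ioi.1 h)), mul_zero,
              Set.indicator_of_notMem (show p ∉ {p : ℝ × ℝ | p.1 < p.2} from hp)]
        rw [this]
        exact (((hfmeas.comp measurable_fst).mul (hgmeas.comp measurable_snd)).indicator
          (measurableSet_lt measurable_fst measurable_snd)).aemeasurable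
    _ = ∫⁻ t in Ioi (0:ℝ), (∫⁻ ϱ in Ioo (0:ℝ) t, f ϱ) * g t := by
        refine lintegral_congr_ae ((ae_restrict_iff' measurableSet_Ioi).2
          (Filter.Eventually.of_forall (fun t ht => ?_)))
        dsimp only
        have h1 : ∀ ϱ : ℝ, f ϱ * (Ioi ϱ).indicator g t =
            (Iio t).indicator (fun ϱ => f ϱ * g t) ϱ := by
          intro ϱ
          by_cases hp : ϱ < t
          · rw [Set.indicator_of_mem (Set.mem_Ioi.2 hp), Set.indicator_of_mem (Set.mem_Iio.2 hp)]
          · rw [Set.indicator_of_notMem (fun h => hp (Set.mem_Ioi.1 h)),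
              Set.indicator_of_notMem (fun h => hp (Set.mem_Iio.1 h)), mul_zero]
        simp only [h1]
        rw [lintegral_indicator measurableSet_Iio,
          Measure.restrict_restrict measurableSet_Iio, Set.Iio_inter_Ioi,
          lintegral_mul_const' _ _ (hgtop t)]
    _ = ∫⁻ t in Ioi (0:ℝ), ENNReal.ofReal (t ^ κ) * g t := by
        refine lintegral_congr_ae ((ae_restrict_iff' measurableSet_Ioi).2
          (Filter.Eventually.of_forall (fun t ht => ?_)))
        have ht : (0:ℝ) < t := ht
        dsimp only
        congr 1
        have hint : IntegrableOn (fun ϱ : ℝ => κ * ϱ ^ e₀) (Ioc 0 t) := by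
          have := (intervalIntegral.intervalIntegrable_rpow' (a := 0) (b := t) he₀)
          rw [intervalIntegrable_iff_integrableOn_Ioc_of_le (le_of_lt ht)] at this
          exact this.const_mul κ
        rw [Measure.restrict_congr_set Ioo_ae_eq_Ioc,
          ← ofReal_integral_eq_lintegral_ofReal hint ?_]
        · congr 1
          have : ∫ ϱ in Ioc 0 t, κ * ϱ ^ e₀ = κ * ∫ ϱ in (0:ℝ)..t, ϱ ^ e₀ := by
            rw [intervalIntegral.integral_of_le (le_of_lt ht), MeasureTheory.integral_const_mul]
          rw [this, integral_rpow (Or.inl he₀), Real.zero_rpow (by rw [he₀κ]; exact hκ.ne'),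
            he₀κ, sub_zero, mul_comm, div_mul_cancel₀ _ hκ.ne']
        · refine (ae_restrict_iff' measurableSet_Ioc).2 (Filter.Eventually.of_forall ?_)
          intro x hx
          have : (0:ℝ) < x ^ e₀ := Real.rpow_pos_of_pos hx.1 _
          positivity
    _ = ∫⁻ t in Ioi (0:ℝ), ENNReal.ofReal ((deriv φ t) ^ 2 * t ^ ((2:ℝ) / Nprime N) * J t) := by
        refine lintegral_congr_ae ((ae_restrict_iff' measurableSet_Ioi).2
          (Filter.Eventually.of_forall (fun t ht => ?_)))
        have ht : (0:ℝ) < t := ht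
        dsimp only
        rw [← ENNReal.ofReal_mul (Real.rpow_nonneg (le_of_lt ht) _)]
        congr 1
        rw [hNper, Real.rpow_add ht]
        ring
end

section
/- Let N ≥ 3 and let W : [0,∞) → [0,∞) be nondecreasing. Then for every smooth compactly supported function u : ℝ^N → ℝ whose support is contained in ℝ^N ∖ {0}, one has ((N−2)/2)² ∫_{ℝ^N} (u(x)²/|x|²) · W(|x|) dx ≤ ∫_{ℝ^N} |∇u(x)|² · W(|x|) dx. -/
open MeasureTheory Set Metric Filter

private lemma oneDim (V : ℝ → ℝ) (hV : Monotone V) (hV0 : 0 ≤ V 0) (h : ℝ → ℝ)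
    (hh : ContDiff ℝ 1 h) (hcs : HasCompactSupport h) (hpos : ∀ r, 0 ≤ r → 0 ≤ h r) :
    ∫ r in Ioi (0:ℝ), deriv h r * V r ≤ 0 := by
  set S := hV.stieltjesFunction with hS
  set μ := S.measure with hμ
  have hSV : ∀ x, S x = Function.rightLim V x := hV.stieltjesFunction_eq
  -- a.e. equality of V and S
  have hae : ∀ᵐ r ∂(volume.restrict (Ioi (0:ℝ))), deriv h r * V r = deriv h r * S r := by
    refine ae_restrict_of_ae ?_
    have hcount : (volume : Measure ℝ) {x | ¬ContinuousAt V x} = 0 :=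
      hV.countable_not_continuousAt.measure_zero _
    have : ∀ᵐ r : ℝ, r ∉ {x | ¬ContinuousAt V x} := measure_eq_zero_iff_ae_notMem.1 hcount
    filter_upwards [this] with r hr
    have hc : ContinuousAt V r := not_not.1 hr
    rw [hSV, hV.continuousWithinAt_Ioi_iff_rightLim_eq.1 hc.continuousWithinAt]
  rw [integral_congr_ae hae]
  have hdc : Continuous (deriv h) := hh.continuous_deriv le_rfl
  -- compact support data
  obtain ⟨R0, hR0⟩ := hcs.isBounded.subset_closedBall 0
  set R := max R0 0 with hR
  have hderiv0 : ∀ r : ℝ, R < |r| → deriv h r = 0 := by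
    intro r hr
    by_contra hne
    have hmem : r ∈ tsupport h := support_deriv_subset (by exact hne)
    have := hR0 hmem
    simp only [Metric.mem_closedBall, Real.dist_eq, sub_zero] at this
    exact absurd (this.trans (le_max_left _ _)) (not_le.2 hr)
  -- the kernel
  set f : ℝ → ℝ → ℝ := fun r s => (Ioc (0:ℝ) r).indicator (fun _ => deriv h r) s with hf
  -- pointwise decomposition on Ioi 0
  have hdecomp : ∀ r ∈ Ioi (0:ℝ), deriv h r * S r = deriv h r * S 0 + ∫ s, f r s ∂μ := by
    intro r hr
    have hmono := S.mono
    have h1 : μ (Ioc 0 r) = ENNReal.ofReal (S r - S 0) := S.measure_Ioc 0 r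
    have h2 : ∫ s, f r s ∂μ = (μ (Ioc 0 r)).toReal • deriv h r :=
      integral_indicator_const (deriv h r) measurableSet_Ioc
    rw [h2, h1, ENNReal.toReal_ofReal (sub_nonneg.2 (hmono hr.out.le))]
    simp only [smul_eq_mul]
    ring
  rw [setIntegral_congr_fun measurableSet_Ioi hdecomp]
  -- integrability of the kernel on the product
  have hA : MeasurableSet {p : ℝ × ℝ | 0 < p.2 ∧ p.2 ≤ p.1} :=
    (measurableSet_lt measurable_const measurable_snd).inter
      (measurableSet_le measurable_snd measurable_fst)
  have hfeq : Function.uncurry f = {p : ℝ × ℝ | 0 < p.2 ∧ p.2 ≤ p.1}.indicator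
      (fun p => deriv h p.1) := by
    ext p
    simp only [Function.uncurry, hf]
    by_cases hp : 0 < p.2 ∧ p.2 ≤ p.1
    · rw [indicator_of_mem (mem_Ioc.2 hp), indicator_of_mem (by exact hp)]
    · rw [indicator_of_notMem (fun hc => hp (mem_Ioc.1 hc)), indicator_of_notMem (by exact hp)]
  have hmeasf : AEStronglyMeasurable (Function.uncurry f)
      ((volume.restrict (Ioi (0:ℝ))).prod μ) := by
    rw [hfeq]
    exact (((hdc.measurable.comp measurable_fst).indicator hA)).aestronglyMeasurable
  have hμIocR : μ (Ioc (0:ℝ) R) < ⊤ := by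
    rw [hμ, S.measure_Ioc]; exact ENNReal.ofReal_lt_top
  have hdom : Integrable (fun p : ℝ × ℝ => |deriv h p.1| * (Ioc (0:ℝ) R).indicator
      (fun _ => (1:ℝ)) p.2) ((volume.restrict (Ioi (0:ℝ))).prod μ) := by
    exact Integrable.mul_prod ((hdc.abs.integrable_of_hasCompactSupport hcs.deriv.abs).restrict)
      ((integrable_indicator_iff measurableSet_Ioc).2 (integrableOn_const hμIocR.ne))
  have hint : Integrable (Function.uncurry f) ((volume.restrict (Ioi (0:ℝ))).prod μ) := by
    refine hdom.mono' hmeasf (ae_of_all _ fun p => ?_)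
    by_cases hp : p.2 ∈ Ioc (0:ℝ) p.1
    · by_cases hp2 : p.2 ∈ Ioc (0:ℝ) R
      · simp only [Function.uncurry, hf, indicator_of_mem hp, indicator_of_mem hp2,
          Real.norm_eq_abs, mul_one]
        exact le_rfl
      · have hR2 : R < p.2 := by
          rcases hp with ⟨h1, _⟩
          by_contra hc
          exact hp2 ⟨h1, not_lt.1 hc⟩
        have : deriv h p.1 = 0 := hderiv0 _ (by
          rw [abs_of_pos (lt_of_lt_of_le (lt_of_le_of_lt (le_max_right R0 0) hR2) hp.2)]
          exact lt_of_lt_of_le hR2 hp.2)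
        simp only [Function.uncurry, hf, indicator_of_mem hp, this, norm_zero]
        exact mul_nonneg (abs_nonneg _) (indicator_nonneg (fun _ _ => zero_le_one) _)
    · simp only [Function.uncurry, hf, indicator_of_notMem hp, norm_zero]
      exact mul_nonneg (abs_nonneg _) (indicator_nonneg (fun _ _ => zero_le_one) _)
  -- split the integral
  have hi1 : Integrable (fun r => deriv h r * S 0) (volume.restrict (Ioi (0:ℝ))) :=
    (((hdc.integrable_of_hasCompactSupport hcs.deriv).mul_const (S 0)).restrict)
  have hi2 : Integrable (fun r => ∫ s, f r s ∂μ) (volume.restrict (Ioi (0:ℝ))) :=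
    hint.integral_prod_left
  rw [integral_add hi1 hi2]
  -- first piece
  have hIoi : ∫ r in Ioi (0:ℝ), deriv h r = - h 0 := hcs.integral_Ioi_deriv_eq hh 0
  have hfirst : ∫ r in Ioi (0:ℝ), deriv h r * S 0 ≤ 0 := by
    rw [integral_mul_const, hIoi]
    have hS0 : 0 ≤ S 0 := le_trans hV0 (by rw [hSV]; exact hV.le_rightLim le_rfl)
    have := hpos 0 le_rfl
    nlinarith
  -- second piece via Fubini
  have hswap : ∫ r in Ioi (0:ℝ), (∫ s, f r s ∂μ) = ∫ s, (∫ r in Ioi (0:ℝ), f r s) ∂μ :=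
    integral_integral_swap hint
  have hsecond : ∫ r in Ioi (0:ℝ), (∫ s, f r s ∂μ) ≤ 0 := by
    rw [hswap]
    refine integral_nonpos fun s => ?_
    by_cases hs : 0 < s
    · have heq : ∀ r, f r s = (Ici s).indicator (deriv h) r := by
        intro r
        by_cases hr : s ≤ r
        · rw [hf]
          simp only
          rw [indicator_of_mem (mem_Ioc.2 ⟨hs, hr⟩), indicator_of_mem (mem_Ici.2 hr)]
        · rw [hf]
          simp only
          rw [indicator_of_notMem (fun hc => hr (mem_Ioc.1 hc).2),
            indicator_of_notMem (fun hc => hr (mem_Ici.1 hc))]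
      simp only [heq]
      rw [setIntegral_indicator measurableSet_Ici]
      have : Ioi (0:ℝ) ∩ Ici s = Ici s := by
        apply inter_eq_self_of_subset_right
        exact fun x hx => lt_of_lt_of_le hs hx
      rw [this, integral_Ici_eq_integral_Ioi, hcs.integral_Ioi_deriv_eq hh s]
      simpa using hpos s hs.le
    · have heq : ∀ r, f r s = 0 := by
        intro r
        rw [hf]
        simp only
        rw [indicator_of_notMem (fun hc => hs (mem_Ioc.1 hc).1)]
      simp only [heq]
      simp
  linarith

private lemma polar_nonpos {E : Type*} [NormedAddCommGroup E] [NormedSpace ℝ E]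
    [MeasurableSpace E] [BorelSpace E] [FiniteDimensional ℝ E] [Nontrivial E]
    (μ : Measure E) [μ.IsAddHaarMeasure] (F : E → ℝ)
    (hF : Integrable F μ)
    (hray : ∀ ω : E, ‖ω‖ = 1 →
      ∫ r in Ioi (0:ℝ), r ^ (Module.finrank ℝ E - 1) * F (r • ω) ≤ 0) :
    ∫ x, F x ∂μ ≤ 0 := by
  have h1 : ∫ x, F x ∂μ = ∫ x : ({(0:E)}ᶜ : Set E), F x ∂(μ.comap Subtype.val) := by
    rw [integral_subtype_comap (measurableSet_singleton _).compl, restrict_compl_singleton]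
  have hmp := μ.measurePreserving_homeomorphUnitSphereProd
  have hemb := (homeomorphUnitSphereProd E).measurableEmbedding
  set g : sphere (0:E) 1 × Ioi (0:ℝ) → ℝ := fun y => F ((y.2 : ℝ) • (y.1 : E)) with hg
  have hcomp : ∀ x : ({(0:E)}ᶜ : Set E), g (homeomorphUnitSphereProd E x) = F x := by
    intro x
    have hx : (x : E) ≠ 0 := x.2
    simp only [hg, homeomorphUnitSphereProd_apply_snd_coe, homeomorphUnitSphereProd_apply_fst_coe]
    rw [smul_inv_smul₀ (norm_ne_zero_iff.2 hx)]
  have h2 : ∫ x : ({(0:E)}ᶜ : Set E), F x ∂(μ.comap Subtype.val) =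
      ∫ y, g y ∂(μ.toSphere.prod (Measure.volumeIoiPow (Module.finrank ℝ E - 1))) := by
    rw [← hmp.integral_comp hemb g]
    exact integral_congr_ae (Filter.Eventually.of_forall fun x => (hcomp x).symm)
  have hFc : Integrable (fun x : ({(0:E)}ᶜ : Set E) => F x) (μ.comap Subtype.val) := by
    have h4 : Integrable F (μ.restrict ({(0:E)}ᶜ : Set E)) := hF.integrableOn
    rw [← map_comap_subtype_coe (measurableSet_singleton (0:E)).compl] at h4
    exact ((MeasurableEmbedding.subtype_coe
      (measurableSet_singleton (0:E)).compl).integrable_map_iff).1 h4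
  have hgint : Integrable g (μ.toSphere.prod (Measure.volumeIoiPow (Module.finrank ℝ E - 1))) := by
    rw [← hmp.integrable_comp_emb hemb]
    exact hFc.congr (Filter.Eventually.of_forall fun x => (hcomp x).symm)
  rw [h1, h2, integral_prod g hgint]
  refine integral_nonpos fun ω => ?_
  have hsm : Measurable fun r : (Ioi (0:ℝ)) =>
      Real.toNNReal ((r:ℝ) ^ (Module.finrank ℝ E - 1)) :=
    (measurable_subtype_coe.pow_const _).real_toNNReal
  have h3 : ∫ r, g (ω, r) ∂(Measure.volumeIoiPow (Module.finrank ℝ E - 1)) =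
      ∫ r in Ioi (0:ℝ), r ^ (Module.finrank ℝ E - 1) * F (r • (ω : E)) := by
    simp only [Measure.volumeIoiPow, ENNReal.ofReal]
    rw [integral_withDensity_eq_integral_smul hsm]
    rw [integral_subtype_comap measurableSet_Ioi
      (fun r : ℝ => Real.toNNReal (r ^ (Module.finrank ℝ E - 1)) • F (r • (ω : E)))]
    refine setIntegral_congr_fun measurableSet_Ioi fun r hr => ?_
    rw [NNReal.smul_def, Real.coe_toNNReal _ (pow_nonneg (le_of_lt hr) _), smul_eq_mul]
  rw [h3]
  exact hray ω (mem_sphere_zero_iff_norm.1 ω.2)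

private lemma integrable_mul_weight {E : Type*} [NormedAddCommGroup E] [MeasureSpace E]
    [OpensMeasurableSpace E] [IsFiniteMeasureOnCompacts (volume : Measure E)]
    (V : ℝ → ℝ) (hVmono : Monotone V) (hV0 : ∀ r, 0 ≤ V r)
    (φ : E → ℝ) (hφm : AEStronglyMeasurable φ volume)
    (K : Set E) (hK : IsCompact K) (hφ0 : ∀ x ∉ K, φ x = 0)
    (C : ℝ) (hφb : ∀ x ∈ K, |φ x| ≤ C) :
    Integrable (fun x => φ x * V ‖x‖) := by
  obtain ⟨R, hR⟩ := hK.isBounded.subset_closedBall 0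
  have hmV : Measurable fun x : E => V ‖x‖ :=
    hVmono.measurable.comp continuous_norm.measurable
  refine Integrable.mono' (g := K.indicator fun _ => C * V R)
    ((integrable_indicator_iff hK.measurableSet).2
      (integrableOn_const hK.measure_lt_top.ne))
    (hφm.mul hmV.aestronglyMeasurable) (ae_of_all _ fun x => ?_)
  by_cases hx : x ∈ K
  · rw [indicator_of_mem hx]
    have h1 : ‖x‖ ≤ R := by simpa [dist_zero_right] using hR hx
    calc ‖φ x * V ‖x‖‖ = |φ x| * V ‖x‖ := by
          rw [Real.norm_eq_abs, abs_mul, abs_of_nonneg (hV0 _)]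
      _ ≤ C * V R := mul_le_mul (hφb x hx) (hVmono h1) (hV0 _)
          ((abs_nonneg _).trans (hφb x hx))
  · rw [indicator_of_notMem hx, hφ0 x hx, zero_mul, norm_zero]

set_option maxHeartbeats 1000000 in
/-- Weighted Euclidean Hardy inequality: for a nondecreasing weight
`W : [0,∞) → [0,∞)` and every smooth compactly supported `u` with support away from the
origin, `((N−2)/2)² ∫ u²|x|⁻² W(|x|) dx ≤ ∫ |∇u|² W(|x|) dx`. -/
theorem stmt_15 (N : ℕ) (hN : 3 ≤ N) (W : ℝ → ℝ)
    (hW0 : ∀ r : ℝ, 0 ≤ r → 0 ≤ W r)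
    (hWmono : MonotoneOn W (Set.Ici 0))
    (u : EuclideanSpace ℝ (Fin N) → ℝ)
    (hu : ContDiff ℝ (⊤ : ℕ∞) u) (hsupp : HasCompactSupport u)
    (h0 : (0 : EuclideanSpace ℝ (Fin N)) ∉ tsupport u) :
    (((N : ℝ) - 2) / 2) ^ 2 *
        ∫ x : EuclideanSpace ℝ (Fin N), (u x) ^ 2 / ‖x‖ ^ 2 * W ‖x‖ ≤
      ∫ x : EuclideanSpace ℝ (Fin N), ‖fderiv ℝ u x‖ ^ 2 * W ‖x‖ := by
  obtain ⟨m, rfl⟩ : ∃ m, N = m + 3 := ⟨N - 3, by omega⟩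
  clear hN
  -- the weight
  set V : ℝ → ℝ := fun r => W (max r 0) with hVdef
  have hVmono : Monotone V := fun a b hab =>
    hWmono (mem_Ici.2 (le_max_right a 0)) (mem_Ici.2 (le_max_right b 0))
      (max_le_max hab le_rfl)
  have hV0 : ∀ r, 0 ≤ V r := fun r => hW0 _ (le_max_right r 0)
  have hVnorm : ∀ x : EuclideanSpace ℝ (Fin (m+3)), W ‖x‖ = V ‖x‖ := fun x => by
    rw [hVdef]; simp [max_eq_left (norm_nonneg x)]
  simp_rw [hVnorm]
  -- constant
  set c : ℝ := (((m : ℝ) + 3) - 2) / 2 with hcdef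
  have hcN : (((m + 3 : ℕ) : ℝ) - 2) / 2 = c := by push_cast [hcdef]; ring
  rw [hcN]
  have hc0 : 0 ≤ c := by
    rw [hcdef]
    have : (0:ℝ) ≤ (m:ℝ) := Nat.cast_nonneg m
    linarith
  have h2c : (m : ℝ) + 1 = 2 * c := by rw [hcdef]; ring
  -- support data
  set K : Set (EuclideanSpace ℝ (Fin (m+3))) := tsupport u with hKdef
  have hKc : IsCompact K := hsupp
  obtain ⟨R0, hKR0⟩ := hKc.isBounded.subset_closedBall 0
  set R : ℝ := max R0 0 with hRdef
  have hR0 : 0 ≤ R := le_max_right _ _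
  have hKR' : ∀ x ∈ K, ‖x‖ ≤ R := fun x hx =>
    le_trans (by simpa [dist_zero_right] using hKR0 hx) (le_max_left _ _)
  -- δ
  obtain ⟨δ, hδ0, hδ⟩ : ∃ δ > 0, ∀ x ∈ K, δ ≤ ‖x‖ := by
    obtain ⟨δ, hδ0, hδball⟩ := Metric.isOpen_iff.1 (isOpen_compl_iff.2 (isClosed_tsupport u)) 0 h0
    refine ⟨δ, hδ0, fun x hx => ?_⟩
    by_contra hc
    exact hδball (by simpa [mem_ball, dist_zero_right] using not_le.1 hc) hx
  have hu0 : ∀ x ∉ K, u x = 0 := fun x hx => image_eq_zero_of_notMem_tsupport hx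
  have hdu0 : ∀ x ∉ K, fderiv ℝ u x = 0 := fun x hx =>
    Function.notMem_support.1 fun hc => hx (support_fderiv_subset ℝ hc)
  -- continuity facts
  have hcu : Continuous u := hu.continuous
  have hcdu : Continuous (fderiv ℝ u) := hu.continuous_fderiv (by simp)
  have hcdux : Continuous fun x : EuclideanSpace ℝ (Fin (m+3)) => fderiv ℝ u x x := hcdu.clm_apply continuous_id
  -- bounds
  obtain ⟨M1, hM10, hM1⟩ : ∃ M1, 0 ≤ M1 ∧ ∀ x ∈ K, |u x| ≤ M1 := by
    obtain ⟨C, hC⟩ := hKc.exists_bound_of_continuousOn hcu.continuousOn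
    exact ⟨max C 0, le_max_right _ _, fun x hx => (hC x hx).trans (le_max_left _ _)⟩
  obtain ⟨M2, hM20, hM2⟩ : ∃ M2, 0 ≤ M2 ∧ ∀ x ∈ K, ‖fderiv ℝ u x‖ ≤ M2 := by
    obtain ⟨C, hC⟩ := hKc.exists_bound_of_continuousOn hcdu.continuousOn
    exact ⟨max C 0, le_max_right _ _, fun x hx => (hC x hx).trans (le_max_left _ _)⟩
  -- the auxiliary function F
  set F : EuclideanSpace ℝ (Fin (m+3)) → ℝ := fun x =>
    (2 * u x * (fderiv ℝ u x x) + 2 * c * (u x) ^ 2) / ‖x‖ ^ 2 * V ‖x‖ with hFdef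
  -- integrability of the three integrands
  have hIL : Integrable (fun x : EuclideanSpace ℝ (Fin (m+3)) => (u x) ^ 2 / ‖x‖ ^ 2 * V ‖x‖) := by
    refine integrable_mul_weight V hVmono hV0 _
      (((hcu.measurable.pow_const 2).div ((measurable_norm.pow_const 2))).aestronglyMeasurable)
      K hKc (fun x hx => by rw [hu0 x hx]; simp) (M1 ^ 2 / δ ^ 2) (fun x hx => ?_)
    rw [abs_div, abs_of_nonneg (sq_nonneg (u x)), abs_of_nonneg (sq_nonneg ‖x‖)]
    refine div_le_div₀ (by positivity) ?_ (by positivity) ?_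
    · rw [← sq_abs]; exact pow_le_pow_left₀ (abs_nonneg _) (hM1 x hx) 2
    · exact pow_le_pow_left₀ hδ0.le (hδ x hx) 2
  have hIR : Integrable (fun x : EuclideanSpace ℝ (Fin (m+3)) => ‖fderiv ℝ u x‖ ^ 2 * V ‖x‖) := by
    refine integrable_mul_weight V hVmono hV0 _
      ((hcdu.norm.pow 2).aestronglyMeasurable)
      K hKc (fun x hx => by rw [hdu0 x hx]; simp) (M2 ^ 2) (fun x hx => ?_)
    rw [abs_of_nonneg (sq_nonneg _)]
    exact pow_le_pow_left₀ (norm_nonneg _) (hM2 x hx) 2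
  have hbop : ∀ x ∈ K, |fderiv ℝ u x x| ≤ M2 * R := by
    intro x hx
    calc |fderiv ℝ u x x| ≤ ‖fderiv ℝ u x‖ * ‖x‖ := by
          simpa [Real.norm_eq_abs] using (fderiv ℝ u x).le_opNorm x
      _ ≤ M2 * R := mul_le_mul (hM2 x hx) (hKR' x hx) (norm_nonneg _) hM20
  have hIF : Integrable F := by
    refine integrable_mul_weight V hVmono hV0 _
      ((((hcu.measurable.const_mul 2).mul hcdux.measurable).add
        ((hcu.measurable.pow_const 2).const_mul (2*c))).div
        ((measurable_norm.pow_const 2)) |>.aestronglyMeasurable)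
      K hKc (fun x hx => by rw [hu0 x hx, hdu0 x hx]; simp)
      ((2 * M1 * (M2 * R) + 2 * c * M1 ^ 2) / δ ^ 2) (fun x hx => ?_)
    rw [abs_div, abs_of_nonneg (sq_nonneg ‖x‖)]
    refine div_le_div₀ (by positivity) ?_ (by positivity)
      (pow_le_pow_left₀ hδ0.le (hδ x hx) 2)
    calc |2 * u x * fderiv ℝ u x x + 2 * c * u x ^ 2|
        ≤ |2 * u x * fderiv ℝ u x x| + |2 * c * u x ^ 2| := abs_add_le _ _
      _ ≤ 2 * M1 * (M2 * R) + 2 * c * M1 ^ 2 := by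
          have e1 : |2 * u x * fderiv ℝ u x x| = 2 * |u x| * |fderiv ℝ u x x| := by
            rw [abs_mul, abs_mul]; norm_num
          have e2 : |2 * c * u x ^ 2| = 2 * c * |u x| ^ 2 := by
            rw [abs_mul, abs_of_nonneg (by linarith : (0:ℝ) ≤ 2 * c), abs_pow]
          rw [e1, e2]
          have h1 := hM1 x hx
          have h2 := hbop x hx
          have h3 := abs_nonneg (u x)
          have h4 := abs_nonneg (fderiv ℝ u x x)
          nlinarith [mul_le_mul h1 h2 h4 hM10, mul_le_mul h1 h1 h3 hM10,
            mul_le_mul_of_nonneg_left (mul_le_mul h1 h1 h3 hM10) hc0]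
  -- the ray inequality
  have hFray : ∀ ω : EuclideanSpace ℝ (Fin (m+3)), ‖ω‖ = 1 →
      ∫ r in Ioi (0:ℝ), r ^ (m + 2) * F (r • ω) ≤ 0 := by
    intro ω hω
    set h : ℝ → ℝ := fun t => (u (t • ω)) ^ 2 * t ^ (m + 1) with hhdef
    have hd : ∀ r : ℝ, HasDerivAt h
        (2 * u (r • ω) * (fderiv ℝ u (r • ω) ω) * r ^ (m + 1)
          + (u (r • ω)) ^ 2 * (((m : ℝ) + 1) * r ^ m)) r := by
      intro r
      have h1 : HasDerivAt (fun t : ℝ => t • ω) ω r := by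
        simpa using (hasDerivAt_id r).smul_const ω
      have h2 : HasDerivAt (fun t : ℝ => u (t • ω)) (fderiv ℝ u (r • ω) ω) r :=
        (((hu.differentiable (by simp)) (r • ω)).hasFDerivAt).comp_hasDerivAt r h1
      have h3 := (h2.pow 2).mul (hasDerivAt_pow (m + 1) r)
      refine (h3.congr_deriv ?_ : HasDerivAt h _ r)
      push_cast [Pi.pow_apply]
      ring_nf
    have hhc : ContDiff ℝ 1 h :=
      (((hu.comp (contDiff_id.smul contDiff_const)).of_le (by simp)).pow 2).mul
        (contDiff_id.pow (m+1))
    have hhcs : HasCompactSupport h := by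
      refine HasCompactSupport.intro (isCompact_Icc (a := -R) (b := R)) fun t ht => ?_
      have htR : R < |t| := by
        by_contra hc
        exact ht (mem_Icc.2 (abs_le.1 (not_lt.1 hc)))
      have : t • ω ∉ K := fun hc => by
        have := hKR' _ hc
        rw [norm_smul, hω, mul_one, Real.norm_eq_abs] at this
        exact absurd this (not_le.2 htR)
      rw [hhdef]
      simp [hu0 _ this]
    have heq : ∀ r ∈ Ioi (0:ℝ), r ^ (m + 2) * F (r • ω) = deriv h r * V r := by
      intro r hr
      have hr0 : (0:ℝ) < r := hr
      have hrnorm : ‖r • ω‖ = r := by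
        rw [norm_smul, hω, mul_one, Real.norm_eq_abs, abs_of_pos hr0]
      have hfd : fderiv ℝ u (r • ω) (r • ω) = r * fderiv ℝ u (r • ω) ω := by
        rw [ContinuousLinearMap.map_smul, smul_eq_mul]
      rw [(hd r).deriv, hFdef]
      simp only
      rw [hrnorm, hfd, h2c]
      field_simp
      ring
    rw [setIntegral_congr_fun measurableSet_Ioi heq]
    exact oneDim V hVmono (hV0 0) h hhc hhcs
      (fun r hr => mul_nonneg (sq_nonneg _) (pow_nonneg hr _))
  -- F has nonpositive integral
  have hdim : Module.finrank ℝ (EuclideanSpace ℝ (Fin (m+3))) = m + 3 :=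
    finrank_euclideanSpace_fin
  have hFle : ∫ x, F x ≤ 0 := by
    refine polar_nonpos volume F hIF fun ω hω => ?_
    rw [hdim]
    exact hFray ω hω
  -- pointwise inequality
  have hmain : ∀ x : EuclideanSpace ℝ (Fin (m+3)),
      c ^ 2 * ((u x) ^ 2 / ‖x‖ ^ 2 * V ‖x‖) ≤ ‖fderiv ℝ u x‖ ^ 2 * V ‖x‖ + c * F x := by
    intro x
    by_cases hx : x = (0 : EuclideanSpace ℝ (Fin (m+3)))
    · have hxK : x ∉ K := hx ▸ h0
      rw [hu0 x hxK, hFdef]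
      simp only
      rw [hu0 x hxK, hdu0 x hxK]
      simp
    · have hn : (0:ℝ) < ‖x‖ := norm_pos_iff.2 hx
      set a := u x
      set b := fderiv ℝ u x x with hbdef
      set B := ‖fderiv ℝ u x‖ with hBdef
      set n := ‖x‖
      set v := V ‖x‖
      have hv : 0 ≤ v := hV0 _
      have hB : 0 ≤ B := norm_nonneg _
      have hb : |b| ≤ B * n := by
        simpa [Real.norm_eq_abs] using (fderiv ℝ u x).le_opNorm x
      have hkey : c ^ 2 * (a ^ 2 / n ^ 2) ≤ B ^ 2 + c * ((2 * a * b + 2 * c * a ^ 2) / n ^ 2) := by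
        have hn2 : (0:ℝ) < n ^ 2 := by positivity
        have hpoly : 0 ≤ B ^ 2 * n ^ 2 + c * (2 * a * b) + c ^ 2 * a ^ 2 := by
          have h1 : 0 ≤ (B * n - c * |a|) ^ 2 := sq_nonneg _
          have h2 : -(|a| * |b|) ≤ a * b := by
            rw [← abs_mul]; exact neg_abs_le _
          have h3 : |a| * |b| ≤ |a| * (B * n) := mul_le_mul_of_nonneg_left hb (abs_nonneg a)
          nlinarith [sq_abs a, abs_nonneg a, abs_nonneg b]
        have hstep : -(B ^ 2) ≤ (c * (2 * a * b) + c ^ 2 * a ^ 2) / n ^ 2 := by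
          rw [le_div_iff₀ hn2]
          nlinarith
        have hexp : B ^ 2 + c * ((2 * a * b + 2 * c * a ^ 2) / n ^ 2) - c ^ 2 * (a ^ 2 / n ^ 2)
            = B ^ 2 + (c * (2 * a * b) + c ^ 2 * a ^ 2) / n ^ 2 := by
          field_simp
          ring
        linarith [hexp ▸ (by linarith : (0:ℝ) ≤ B ^ 2 + (c * (2 * a * b) + c ^ 2 * a ^ 2) / n ^ 2)]
      calc c ^ 2 * (a ^ 2 / n ^ 2 * v) = (c ^ 2 * (a ^ 2 / n ^ 2)) * v := by ring
        _ ≤ (B ^ 2 + c * ((2 * a * b + 2 * c * a ^ 2) / n ^ 2)) * v :=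
            mul_le_mul_of_nonneg_right hkey hv
        _ = B ^ 2 * v + c * F x := by rw [hFdef]; ring
  -- conclude
  have hstep1 : c ^ 2 * ∫ x : EuclideanSpace ℝ (Fin (m+3)), (u x) ^ 2 / ‖x‖ ^ 2 * V ‖x‖
      ≤ ∫ x : EuclideanSpace ℝ (Fin (m+3)), (‖fderiv ℝ u x‖ ^ 2 * V ‖x‖ + c * F x) := by
    rw [← integral_const_mul]
    exact integral_mono (hIL.const_mul _) (hIR.add (hIF.const_mul c)) hmain
  rw [integral_add hIR (hIF.const_mul c), integral_const_mul] at hstep1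
  have hcf : 0 ≤ c * -(∫ x, F x) := mul_nonneg hc0 (neg_nonneg.2 hFle)
  linarith
end

section
/- Let N ≥ 3 and let W : (0,∞) → [0,∞) be nondecreasing. Then for every continuously differentiable function U : (0,∞) → ℝ with compact support contained in (0,∞), one has ((N−2)/2)² ∫₀^∞ U(r)² · r^{N−3} · W(r) dr ≤ ∫₀^∞ U'(r)² · r^{N−1} · W(r) dr. -/
/-!
With `k = N - 3` and `c = (k+1)/2`, differentiate `g = U² r^(k+1) ≥ 0`:
`g' = 2 U U' r^(k+1) + 2c U² r^k`. For a nondecreasing weight `V`, `∫ g' V ≤ 0`, because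
`h ↦ ∫ g(x+h) V(x) dx = ∫ g(y) V(y-h) dy` is nonincreasing and its derivative at `0` is `∫ g' V`.
This gives `2D + 2cA ≤ 0` for `A = ∫ U² r^k V` and `D = ∫ U U' r^(k+1) V`. Integrating
`0 ≤ r^k (c U + U' r)² V` gives `-2cD ≤ c²A + B` with `B = ∫ U'² r^(k+2) V`, hence `c²A ≤ B`.
A weight that is only nondecreasing on `(0,∞)` is first replaced by `r ↦ W (max r a)`, where
`[a,∞)` contains the support of `U`.
-/

open MeasureTheory Set Function

theorem Monotone.integrable_mul_of_hasCompactSupport {f V : ℝ → ℝ} (hV : Monotone V)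
    (hf : Continuous f) (hfs : HasCompactSupport f) : Integrable fun x ↦ f x * V x :=
  hV.locallyIntegrable.integrable_smul_left_of_hasCompactSupport hf hfs

theorem Monotone.antitone_integral_comp_add_mul {g V : ℝ → ℝ} (hV : Monotone V)
    (hg : Continuous g) (hgs : HasCompactSupport g) (hg0 : 0 ≤ g) :
    Antitone fun h ↦ ∫ x, g (x + h) * V x := by
  have shift (h : ℝ) : ∫ x, g (x + h) * V x = ∫ x, g x * V (x - h) := by
    simpa using integral_add_right_eq_self (fun x ↦ g x * V (x - h)) h
  have hint (h : ℝ) : Integrable fun x ↦ g x * V (x - h) :=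
    (hV.comp fun _ _ hxy ↦ sub_le_sub_right hxy h).integrable_mul_of_hasCompactSupport hg hgs
  intro h₁ h₂ hh
  simp only [shift]
  exact integral_mono (hint h₂) (hint h₁) fun x ↦
    mul_le_mul_of_nonneg_left (hV (by linarith)) (hg0 x)

theorem Monotone.hasDerivAt_integral_comp_add_mul {g V : ℝ → ℝ} (hV : Monotone V)
    (hg : ContDiff ℝ 1 g) (hgs : HasCompactSupport g) :
    HasDerivAt (fun h ↦ ∫ x, g (x + h) * V x) (∫ x, deriv g x * V x) 0 := by
  obtain ⟨R, hR⟩ := hgs.isCompact.isBounded.subset_closedBall 0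
  have hg' := hg.continuous_deriv le_rfl
  obtain ⟨L, hL⟩ := hgs.deriv.exists_bound_of_continuous hg'
  set bound := (Metric.closedBall 0 (R + 1)).indicator fun x ↦ L * ‖V x‖ with hbound_def
  have hbound (x h : ℝ) (hh : h ∈ Metric.ball 0 1) : ‖deriv g (x + h) * V x‖ ≤ bound x := by
    by_cases hx : deriv g (x + h) = 0
    · simp only [hx, zero_mul, norm_zero]
      exact indicator_nonneg (fun y _ ↦ mul_nonneg ((norm_nonneg _).trans (hL 0)) (norm_nonneg _)) x
    · have hxR := mem_closedBall_zero_iff.1 (hR (support_deriv_subset hx))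
      have hxh := norm_sub_le (x + h) h
      rw [add_sub_cancel_right] at hxh
      rw [mem_ball_zero_iff] at hh
      rw [hbound_def, indicator_of_mem (mem_closedBall_zero_iff.2 (by linarith)), norm_mul]
      exact mul_le_mul_of_nonneg_right (hL _) (norm_nonneg _)
  have hbound_int : Integrable bound :=
    (integrable_indicator_iff measurableSet_closedBall).2 <|
      (hV.locallyIntegrable.integrableOn_isCompact (isCompact_closedBall 0 _)).norm.const_mul L
  have hdiff (x h : ℝ) : HasDerivAt (fun h ↦ g (x + h) * V x) (deriv g (x + h) * V x) h :=
    ((hg.differentiable one_ne_zero _).hasDerivAt.comp_const_add x h).mul_const (V x)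
  simpa using (hasDerivAt_integral_of_dominated_loc_of_deriv_le (F := fun h x ↦ g (x + h) * V x)
    (F' := fun h x ↦ deriv g (x + h) * V x) (Metric.ball_mem_nhds 0 one_pos)
    (.of_forall fun h ↦ ((hg.continuous.comp (continuous_add_const h)).measurable.mul
      hV.measurable).aestronglyMeasurable)
    (by simpa using hV.integrable_mul_of_hasCompactSupport hg.continuous hgs)
    ((hg'.measurable.comp (measurable_add_const 0)).mul hV.measurable).aestronglyMeasurable
    (.of_forall fun x h hh ↦ hbound x h hh) hbound_int (.of_forall fun x h _ ↦ hdiff x h)).2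

theorem Monotone.integral_deriv_mul_nonpos {g V : ℝ → ℝ} (hV : Monotone V)
    (hg : ContDiff ℝ 1 g) (hgs : HasCompactSupport g) (hg0 : 0 ≤ g) :
    ∫ x, deriv g x * V x ≤ 0 :=
  (hV.hasDerivAt_integral_comp_add_mul hg hgs).deriv ▸
    (hV.antitone_integral_comp_add_mul hg.continuous hgs hg0).deriv_nonpos

theorem HasDerivAt.sq_mul_pow {U : ℝ → ℝ} {u' r : ℝ} (hU : HasDerivAt U u' r) (k : ℕ) :
    HasDerivAt (fun r ↦ U r ^ 2 * r ^ (k + 1))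
      (2 * (U r * u' * r ^ (k + 1)) + (k + 1) * (U r ^ 2 * r ^ k)) r := by
  refine ((hU.fun_pow 2).fun_mul (hasDerivAt_pow (k + 1) r)).congr_deriv ?_
  push_cast
  ring

theorem Monotone.integral_deriv_sq_mul_pow_mul_nonpos (k : ℕ) {U V : ℝ → ℝ} (hV : Monotone V)
    (hU : ContDiff ℝ 1 U) (hUs : HasCompactSupport U) (hU0 : tsupport U ⊆ Ioi 0) :
    2 * (∫ r in Ioi 0, U r * deriv U r * r ^ (k + 1) * V r) +
      (k + 1) * ∫ r in Ioi 0, U r ^ 2 * r ^ k * V r ≤ 0 := by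
  have hUz (r : ℝ) (hr : r ∉ Ioi 0) : U r = 0 ∧ deriv U r = 0 :=
    ⟨image_eq_zero_of_notMem_tsupport fun h ↦ hr (hU0 h),
      notMem_support.1 fun h ↦ hr (hU0 (support_deriv_subset h))⟩
  have hg : deriv (fun r ↦ U r ^ 2 * r ^ (k + 1)) = fun r ↦
      2 * (U r * deriv U r * r ^ (k + 1)) + (k + 1) * (U r ^ 2 * r ^ k) :=
    funext fun r ↦ ((hU.differentiable one_ne_zero r).hasDerivAt.sq_mul_pow k).deriv
  have hg0 : 0 ≤ fun r ↦ U r ^ 2 * r ^ (k + 1) := fun r ↦ by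
    rcases lt_or_ge 0 r with hr | hr
    · positivity
    · simp [(hUz r hr.not_gt).1]
  have hle := hV.integral_deriv_mul_nonpos (by fun_prop)
    (hUs.mono fun r hr h0 ↦ hr (by simp [h0])) hg0
  rw [← setIntegral_eq_integral_of_forall_compl_eq_zero (s := Ioi 0)
    fun r hr ↦ by simp [hg, (hUz r hr).1, (hUz r hr).2], hg] at hle
  have hintA : Integrable fun r ↦ U r ^ 2 * r ^ k * V r :=
    hV.integrable_mul_of_hasCompactSupport (by fun_prop) (hUs.mono fun r hr h0 ↦ hr (by simp [h0]))
  have hintD : Integrable fun r ↦ U r * deriv U r * r ^ (k + 1) * V r :=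
    hV.integrable_mul_of_hasCompactSupport (by fun_prop) (hUs.mono fun r hr h0 ↦ hr (by simp [h0]))
  convert hle using 1
  rw [← integral_const_mul, ← integral_const_mul,
    ← integral_add (hintD.const_mul 2).integrableOn (hintA.const_mul _).integrableOn]
  congr 1 with r
  ring

theorem neg_two_mul_mul_pow_le_sq_mul_pow_add (k : ℕ) {c u u' r v : ℝ} (hr : 0 ≤ r)
    (hv : 0 ≤ v) :
    -(2 * c * (u * u' * r ^ (k + 1) * v)) ≤
      c ^ 2 * (u ^ 2 * r ^ k * v) + u' ^ 2 * r ^ (k + 2) * v := by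
  have hsq : c ^ 2 * (u ^ 2 * r ^ k * v) + u' ^ 2 * r ^ (k + 2) * v
      - -(2 * c * (u * u' * r ^ (k + 1) * v)) = r ^ k * (c * u + u' * r) ^ 2 * v := by ring
  have := mul_nonneg (mul_nonneg (pow_nonneg hr k) (sq_nonneg (c * u + u' * r))) hv
  linarith

theorem Monotone.radial_hardy_inequality (k : ℕ) {U V : ℝ → ℝ} (hV : Monotone V)
    (hV0 : ∀ r, 0 < r → 0 ≤ V r) (hU : ContDiff ℝ 1 U) (hUs : HasCompactSupport U)
    (hU0 : tsupport U ⊆ Ioi 0) :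
    (((k : ℝ) + 1) / 2) ^ 2 * ∫ r in Ioi 0, U r ^ 2 * r ^ k * V r ≤
      ∫ r in Ioi 0, deriv U r ^ 2 * r ^ (k + 2) * V r := by
  set c : ℝ := ((k : ℝ) + 1) / 2 with hc
  have hintA : Integrable fun r ↦ U r ^ 2 * r ^ k * V r :=
    hV.integrable_mul_of_hasCompactSupport (by fun_prop) (hUs.mono fun r hr h0 ↦ hr (by simp [h0]))
  have hintB : Integrable fun r ↦ deriv U r ^ 2 * r ^ (k + 2) * V r :=
    hV.integrable_mul_of_hasCompactSupport (by fun_prop)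
      (hUs.deriv.mono fun r hr h0 ↦ hr (by simp [h0]))
  have hintD : Integrable fun r ↦ U r * deriv U r * r ^ (k + 1) * V r :=
    hV.integrable_mul_of_hasCompactSupport (by fun_prop) (hUs.mono fun r hr h0 ↦ hr (by simp [h0]))
  set A := ∫ r in Ioi 0, U r ^ 2 * r ^ k * V r with hA
  set B := ∫ r in Ioi 0, deriv U r ^ 2 * r ^ (k + 2) * V r with hB
  set D := ∫ r in Ioi 0, U r * deriv U r * r ^ (k + 1) * V r with hD
  have hparts : 2 * D + 2 * c * A ≤ 0 := by
    convert hV.integral_deriv_sq_mul_pow_mul_nonpos k hU hUs hU0 using 3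
    rw [hc]
    ring
  have hamgm : -(2 * c * D) ≤ c ^ 2 * A + B := by
    rw [hD, hA, hB, ← integral_const_mul, ← integral_neg, ← integral_const_mul,
      ← integral_add (hintA.const_mul _).integrableOn hintB.integrableOn]
    exact setIntegral_mono_on (hintD.const_mul _).neg.integrableOn
      ((hintA.const_mul _).add hintB).integrableOn measurableSet_Ioi fun r hr ↦
        neg_two_mul_mul_pow_le_sq_mul_pow_add k (le_of_lt hr) (hV0 r hr)
  have hc0 : 0 ≤ c := by positivity
  nlinarith

theorem IsCompact.exists_gt_subset_Ici {K : Set ℝ} {b : ℝ} (hK : IsCompact K) (hb : K ⊆ Ioi b) :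
    ∃ a, b < a ∧ K ⊆ Ici a := by
  rcases K.eq_empty_or_nonempty with rfl | hne
  · exact ⟨b + 1, by linarith, empty_subset _⟩
  · obtain ⟨a, haK, ha⟩ := hK.exists_isLeast hne
    exact ⟨a, hb haK, ha⟩

theorem MonotoneOn.monotone_comp_max {α β : Type*} [LinearOrder α] [Preorder β] {f : α → β}
    {a : α} (hf : MonotoneOn f (Ici a)) : Monotone fun x ↦ f (max x a) :=
  fun _ _ hxy ↦ hf (le_max_right _ _) (le_max_right _ _) (max_le_max hxy le_rfl)

/-- One-dimensional radial form of the weighted Euclidean Hardy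
inequality: for a nondecreasing weight `W : (0,∞) → [0,∞)` and every `C¹` function `U`
with compact support in `(0,∞)`,
`((N−2)/2)² ∫₀^∞ U² r^{N−3} W(r) dr ≤ ∫₀^∞ U'² r^{N−1} W(r) dr`. -/
theorem stmt_16 (N : ℕ) (hN : 3 ≤ N) (W : ℝ → ℝ)
    (hW0 : ∀ r : ℝ, 0 < r → 0 ≤ W r)
    (hWmono : MonotoneOn W (Set.Ioi 0))
    (U : ℝ → ℝ) (hU : ContDiff ℝ 1 U) (hsupp : HasCompactSupport U)
    (hsupp0 : tsupport U ⊆ Set.Ioi 0) :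
    (((N : ℝ) - 2) / 2) ^ 2 *
        ∫ r in Set.Ioi (0:ℝ), (U r) ^ 2 * r ^ (N - 3) * W r ≤
      ∫ r in Set.Ioi (0:ℝ), (deriv U r) ^ 2 * r ^ (N - 1) * W r := by
  obtain ⟨k, rfl⟩ : ∃ k, N = k + 3 := ⟨N - 3, by omega⟩
  obtain ⟨a, ha, haU⟩ := hsupp.isCompact.exists_gt_subset_Ici hsupp0
  set V : ℝ → ℝ := fun r ↦ W (max r a)
  have hV : Monotone V := (hWmono.mono (Ici_subset_Ioi.2 ha)).monotone_comp_max
  have hV0 (r : ℝ) (_ : 0 < r) : 0 ≤ V r := hW0 _ (ha.trans_le (le_max_right _ _))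
  have hVW (r : ℝ) : (U r = 0 ∧ deriv U r = 0) ∨ V r = W r := by
    by_cases hr : r ∈ tsupport U
    · exact .inr (by simp only [V, max_eq_left (mem_Ici.1 (haU hr))])
    · exact .inl ⟨image_eq_zero_of_notMem_tsupport hr,
        notMem_support.1 fun h ↦ hr (support_deriv_subset h)⟩
  have hA : ∫ r in Ioi 0, U r ^ 2 * r ^ k * W r = ∫ r in Ioi 0, U r ^ 2 * r ^ k * V r :=
    setIntegral_congr_fun measurableSet_Ioi fun r _ ↦ by rcases hVW r with h | h <;> simp [h]
  have hB : ∫ r in Ioi 0, deriv U r ^ 2 * r ^ (k + 2) * W r =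
      ∫ r in Ioi 0, deriv U r ^ 2 * r ^ (k + 2) * V r :=
    setIntegral_congr_fun measurableSet_Ioi fun r _ ↦ by rcases hVW r with h | h <;> simp [h]
  rw [Nat.add_sub_cancel, show k + 3 - 1 = k + 2 by omega, hA, hB]
  convert hV.radial_hardy_inequality k hV0 hU hsupp hsupp0 using 3
  push_cast
  ring
end
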